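/- arXiv:2401.01723 — 5 statements merged into one kernel-verified Lean document; each statement's English description precedes it below -/
import Mathlib

section
/- For indeterminates x_1,…,x_n, the determinant of the n×n matrix with (i,j)-entry x_i^{n-j+1} − x_i^{-(n-j+1)} equals ∏_{i=1}^n (x_i − x_i^{-1}) · ∏_{1≤i<j≤n} (x_i + x_i^{-1} − x_j − x_j^{-1}). -/
/-!
Write `z = x + x⁻¹`. The polynomials `S_k` (Chebyshev polynomials of the second kind, rescaled
so that they are monic of degree `k`) satisfy `x ^ (k + 1) - x⁻¹ ^ (k + 1) = (x - x⁻¹) S_k(z)`.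
Pulling the factor `x_i - x_i⁻¹` out of row `i` leaves the matrix `(S_{n-1-j}(z_i))`, whose
determinant is the Vandermonde determinant `∏_{i<j} (z_i - z_j)` because column operations
reduce monic polynomials of degrees `0, …, n - 1` to the monomials.
-/

open Polynomial Finset

namespace Polynomial.Chebyshev

variable {R : Type*} [CommRing R]

theorem S_natCast_add_two (n : ℕ) : S R (n + 2 : ℕ) = X * S R (n + 1 : ℕ) - S R n := by
  push_cast
  exact S_add_two R n

theorem natDegree_S_natCast [Nontrivial R] : ∀ n : ℕ, (S R n).natDegree = n
  | 0 => by simp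
  | 1 => by simp
  | n + 2 => by
    have h_ne : S R (n + 1 : ℕ) ≠ 0 :=
      ne_zero_of_natDegree_gt (n := 0) (by rw [natDegree_S_natCast]; omega)
    have h_X_mul : (X * S R (n + 1 : ℕ)).natDegree = n + 2 := by
      rw [natDegree_X_mul h_ne, natDegree_S_natCast]
    rw [S_natCast_add_two,
      natDegree_sub_eq_left_of_natDegree_lt (by rw [h_X_mul, natDegree_S_natCast]; omega), h_X_mul]

theorem monic_S_natCast [Nontrivial R] : ∀ n : ℕ, (S R n).Monic
  | 0 => by simp
  | 1 => by simp
  | n + 2 => by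
    have h_monic : (S R (n + 1 : ℕ)).Monic := monic_S_natCast (n + 1)
    rw [S_natCast_add_two]
    refine (monic_X.mul h_monic).sub_of_left (degree_lt_degree ?_)
    rw [natDegree_X_mul h_monic.ne_zero, natDegree_S_natCast, natDegree_S_natCast]
    omega

theorem sub_mul_S_eval_add (x y : R) (h : x * y = 1) :
    ∀ n : ℕ, (x - y) * (S R n).eval (x + y) = x ^ (n + 1) - y ^ (n + 1)
  | 0 => by simp
  | 1 => by
    simp only [Nat.cast_one, S_one, eval_X]
    ring
  | n + 2 => by
    rw [S_natCast_add_two, eval_sub, eval_mul, eval_X]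
    linear_combination (x + y) * sub_mul_S_eval_add x y h (n + 1) - sub_mul_S_eval_add x y h n +
      (x ^ (n + 1) - y ^ (n + 1)) * h

end Polynomial.Chebyshev

theorem Fin.prod_Ioi_rev {M : Type*} [CommMonoid M] {n : ℕ} (f : Fin n → Fin n → M) :
    ∏ i, ∏ j ∈ Ioi i, f (Fin.rev j) (Fin.rev i) = ∏ i, ∏ j ∈ Ioi i, f i j := by
  rw [prod_sigma', prod_sigma']
  refine prod_nbij' (fun p => ⟨Fin.rev p.2, Fin.rev p.1⟩) (fun p => ⟨Fin.rev p.2, Fin.rev p.1⟩)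
    ?_ ?_ ?_ ?_ ?_ <;> simp

theorem Matrix.det_eval_rev_matrixOfPolynomials {R : Type*} [CommRing R] {n : ℕ}
    (v : Fin n → R) (p : Fin n → R[X])
    (h_deg : ∀ i, (p i).natDegree = i) (h_monic : ∀ i, (p i).Monic) :
    (Matrix.of fun i j : Fin n => (p j.rev).eval (v i)).det = ∏ i, ∏ j ∈ Ioi i, (v i - v j) := by
  have h_rev : (Matrix.of fun i j : Fin n => (p j.rev).eval (v i)) =
      (Matrix.of fun i j => (p j).eval (v i.rev)).submatrix Fin.revPerm Fin.revPerm := by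
    ext i j
    simp
  rw [h_rev, det_submatrix_equiv_self,
    ← det_eval_matrixOfPolynomials_eq_det_vandermonde _ _ h_deg h_monic, det_vandermonde,
    Fin.prod_Ioi_rev (fun i j => v i - v j)]

/-- Weyl denominator formula for the symplectic group Sp(2n). -/
theorem symplectic_weyl_denominator {K : Type*} [Field K] (n : ℕ) (x : Fin n → K)
    (hx : ∀ i, x i ≠ 0) :
    (Matrix.of fun i j : Fin n => x i ^ (n - (j : ℕ)) - (x i)⁻¹ ^ (n - (j : ℕ))).det
      = (∏ i, (x i - (x i)⁻¹)) *
        ∏ i, ∏ j ∈ Finset.Ioi i, (x i + (x i)⁻¹ - x j - (x j)⁻¹) := by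
  have h_entry (i j : Fin n) : x i ^ (n - (j : ℕ)) - (x i)⁻¹ ^ (n - (j : ℕ)) =
      (x i - (x i)⁻¹) * (Chebyshev.S K (j.rev : ℕ)).eval (x i + (x i)⁻¹) := by
    rw [Chebyshev.sub_mul_S_eval_add _ _ (mul_inv_cancel₀ (hx i)), Fin.val_rev]
    congr 2 <;> omega
  simp_rw [h_entry]
  refine (Matrix.det_mul_column _ _).trans (congrArg _ ?_)
  refine (Matrix.det_eval_rev_matrixOfPolynomials (fun i => x i + (x i)⁻¹)
    (fun j => Chebyshev.S K j) (fun j => Chebyshev.natDegree_S_natCast j)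
    (fun j => Chebyshev.monic_S_natCast j)).trans ?_
  simp only [sub_add_eq_sub_sub]
end

section
/- Let λ, with ℓ(λ) ≤ n₁ and λ₁ ≤ n₂, be a partition. Then the sets {λ_i + n₁ − i : 1 ≤ i ≤ n₁} and {n₁ − 1 + j − λ'_j : 1 ≤ j ≤ n₂} are disjoint and their union is {0, 1, …, n₁ + n₂ − 1}. -/
/-!
Write `λ'_a = #{i < n₁ | a ≤ λ_i}` (`conjPart n₁ lam a`). Since `λ` is antitone,
`{i < n₁ | a ≤ λ_i}` is an initial segment, so `i < λ'_a ↔ a ≤ λ_i`. If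
`λ_i + n₁ - 1 - i = n₁ + j - λ'_{j+1}`, then either `j + 1 ≤ λ_i` and `i < λ'_{j+1}`, making
the left side too large, or `λ_i ≤ j` and `λ'_{j+1} ≤ i`, making it too small; so the two sets
are disjoint. Both maps are injective (the first strictly decreasing, the second strictly
increasing) with values below `n₁ + n₂`, so the disjoint union has `n₁ + n₂` elements in
`range (n₁ + n₂)`.
-/

open Finset

def conjPart (n : ℕ) (lam : ℕ → ℕ) (a : ℕ) : ℕ := #{i ∈ range n | a ≤ lam i}

namespace conjPart

variable {n : ℕ} {lam : ℕ → ℕ}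

theorem le (a : ℕ) : conjPart n lam a ≤ n :=
  (card_filter_le _ _).trans_eq (card_range n)

theorem antitone : Antitone (conjPart n lam) := fun _ _ hab =>
  card_le_card <| monotone_filter_right _ fun _ _ h => hab.trans h

theorem lt_iff (hA : Antitone lam) {i a : ℕ} (hi : i < n) :
    i < conjPart n lam a ↔ a ≤ lam i := by
  constructor
  · intro h
    by_contra! hlt
    have hsub : {k ∈ range n | a ≤ lam k} ⊆ range i := fun k hk => by
      simp only [mem_filter, mem_range] at hk ⊢
      by_contra! hik
      have := hA hik
      omega
    exact ((card_le_card hsub).trans_eq (card_range i)).not_gt h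
  · intro h
    have hsub : range (i + 1) ⊆ {k ∈ range n | a ≤ lam k} := fun k hk => by
      simp only [mem_filter, mem_range] at hk ⊢
      exact ⟨by omega, h.trans (hA (by omega))⟩
    exact (card_range (i + 1)).symm.trans_le (card_le_card hsub)

end conjPart

theorem strictAntiOn_add_sub (n : ℕ) {lam : ℕ → ℕ} (hA : Antitone lam) :
    StrictAntiOn (fun i => lam i + (n - 1 - i)) (Set.Iio n) := fun i _ i' hi' hii' => by
  have := hA hii'.le
  simp only [Set.mem_Iio] at hi'
  dsimp only
  omega

theorem strictMono_add_sub_conjPart (n : ℕ) (lam : ℕ → ℕ) :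
    StrictMono (fun j => n + j - conjPart n lam (j + 1)) := fun j j' hjj' => by
  have := conjPart.antitone (n := n) (lam := lam) (by omega : j + 1 ≤ j' + 1)
  have := conjPart.le (n := n) (lam := lam) (j + 1)
  have := conjPart.le (n := n) (lam := lam) (j' + 1)
  dsimp only
  omega

theorem add_sub_ne_add_sub_conjPart {n : ℕ} {lam : ℕ → ℕ} (hA : Antitone lam) {i : ℕ}
    (hi : i < n) (j : ℕ) : lam i + (n - 1 - i) ≠ n + j - conjPart n lam (j + 1) := by
  have hiff := conjPart.lt_iff (a := j + 1) hA hi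
  have := conjPart.le (n := n) (lam := lam) (j + 1)
  by_cases h : j + 1 ≤ lam i
  · have := hiff.mpr h
    omega
  · have := mt hiff.mp h
    omega

theorem partition_staircase_complement_general (n₁ n₂ : ℕ) (lam : ℕ → ℕ) (hA : Antitone lam)
    (hmax : lam 0 ≤ n₂) :
    Disjoint
      ((Finset.range n₁).image (fun i => lam i + (n₁ - 1 - i)))
      ((Finset.range n₂).image (fun j =>
        n₁ + j - ((Finset.range n₁).filter (fun i => j + 1 ≤ lam i)).card)) ∧
    ((Finset.range n₁).image (fun i => lam i + (n₁ - 1 - i))) ∪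
      ((Finset.range n₂).image (fun j =>
        n₁ + j - ((Finset.range n₁).filter (fun i => j + 1 ≤ lam i)).card))
      = Finset.range (n₁ + n₂) := by
  change Disjoint _ ((range n₂).image fun j => n₁ + j - conjPart n₁ lam (j + 1)) ∧ _ ∪
    (range n₂).image (fun j => n₁ + j - conjPart n₁ lam (j + 1)) = _
  have hdisj : Disjoint ((range n₁).image fun i => lam i + (n₁ - 1 - i))
      ((range n₂).image fun j => n₁ + j - conjPart n₁ lam (j + 1)) := by
    simp only [disjoint_left, mem_image, mem_range, not_exists, not_and]
    rintro _ ⟨i, hi, rfl⟩ j _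
    exact (add_sub_ne_add_sub_conjPart hA hi j).symm
  refine ⟨hdisj, eq_of_subset_of_card_le ?_ ?_⟩
  · intro d hd
    simp only [mem_union, mem_image, mem_range] at hd ⊢
    rcases hd with ⟨i, hi, rfl⟩ | ⟨j, hj, rfl⟩
    · have := hA (Nat.zero_le i)
      omega
    · omega
  · rw [card_union_of_disjoint hdisj, card_range,
      card_image_of_injOn (by simpa using (strictAntiOn_add_sub n₁ hA).injOn),
      card_image_of_injective _ (strictMono_add_sub_conjPart n₁ lam).injective,
      card_range, card_range]

/-- For a partition `λ` with at most `n₁` parts, each at most `n₂`, the sets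
`{λ_i + n₁ - i : 1 ≤ i ≤ n₁}` and `{n₁ - 1 + j - λ'_j : 1 ≤ j ≤ n₂}` are disjoint
and their union is `{0, 1, …, n₁ + n₂ - 1}`.  (Here `λ` is 0-indexed: `lam i` is
`λ_{i+1}`, and the conjugate `λ'_j = #{i : λ_i ≥ j}`.) -/
theorem partition_staircase_complement (n₁ n₂ : ℕ) (lam : ℕ → ℕ) (hA : Antitone lam)
    (hlen : ∀ i, n₁ ≤ i → lam i = 0) (hmax : lam 0 ≤ n₂) :
    Disjoint
      ((Finset.range n₁).image (fun i => lam i + (n₁ - 1 - i)))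
      ((Finset.range n₂).image (fun j =>
        n₁ + j - ((Finset.range n₁).filter (fun i => j + 1 ≤ lam i)).card)) ∧
    ((Finset.range n₁).image (fun i => lam i + (n₁ - 1 - i))) ∪
      ((Finset.range n₂).image (fun j =>
        n₁ + j - ((Finset.range n₁).filter (fun i => j + 1 ≤ lam i)).card))
      = Finset.range (n₁ + n₂) :=
  partition_staircase_complement_general n₁ n₂ lam hA hmax
end

section
/- Let q(x,y,z,a,b) = (1+xz)(1+yz)/(1−xy) − a·(x+z)(1+yz)/(x−y) + b·(1+xz)(y+z)/(x−y) − ab·(x+z)(y+z)/(1−xy). Then for variables x₁,…,x_n, y₁,…,y_n, a₁,…,a_n, b₁,…,b_n, z: det( q(x_i, y_j, z, a_i, b_j) )_{1≤i,j≤n} = (−1)^n / ( ∏_{i,j} (x_i − y_j)(1 − x_i y_j) ) · det W, where W is the (2n+1)×(2n+1) matrix with W_{i,j} = x_i^{j−1} − a_i x_i^{2n+1−j} for 1 ≤ i ≤ n, W_{i,j} = y_{i−n}^{j−1} − b_{i−n} y_{i−n}^{2n+1−j} for n+1 ≤ i ≤ 2n, and W_{2n+1,j} = (−z)^{2n+1−j}.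 -/
/-!
The rows of `W` are linear functionals on binary forms of degree `2n`: evaluation at `(x_i : 1)`
minus `a_i` times evaluation at `(1 : x_i)`, the same with `y_j, b_j`, and evaluation at `(1 : -z)`.
On a basis of forms built from the quadrics `(X - y_l Y)(Y - y_l X)`, which vanish at `(y_l : 1)`
and `(1 : y_l)`, these functionals give a block triangular matrix whose first block is the matrix of
the `q(x_i, y_k, z, a_i, b_k)` with rescaled rows. The determinant of that basis comes out of the
same computation for a projective Vandermonde matrix. The leftover factors involve only `y` and
`z`, so they can be cancelled when the `y_l` are indeterminates, and the identity specialises.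
-/

/-- The rational function `q(x,y,z,a,b)` of Lemma 4.3. -/
noncomputable def qfun {K : Type*} [Field K] (x y z a b : K) : K :=
  (1 + x * z) * (1 + y * z) / (1 - x * y)
    - a * ((x + z) * (1 + y * z) / (x - y))
    + b * ((1 + x * z) * (y + z) / (x - y))
    - a * b * ((x + z) * (y + z) / (1 - x * y))

open Matrix MvPolynomial Finset

noncomputable section

theorem MvPolynomial.IsHomogeneous.eval_fin_two {R : Type*} [CommRing R]
    {φ : MvPolynomial (Fin 2) R} {N : ℕ} (hφ : φ.IsHomogeneous N) (x : Fin 2 → R) :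
    eval x φ = ∑ k ∈ range (N + 1),
      coeff (Finsupp.single 0 k + Finsupp.single 1 (N - k)) φ * (x 0 ^ k * x 1 ^ (N - k)) := by
  rw [← Polynomial.homogenize_eq_of_isHomogeneous hφ rfl]
  simp only [Polynomial.coeff_homogenize]
  rw [Polynomial.homogenize]
  simp only [eval_sum, eval_monomial, Finset.Nat.sum_antidiagonal_eq_sum_range_succ_mk]
  refine sum_congr rfl fun k hk => ?_
  have hk : k ≤ N := Nat.lt_succ_iff.mp (mem_range.mp hk)
  simp [Finsupp.prod_fintype, Fin.prod_univ_two, Nat.add_sub_cancel' hk]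

theorem prod_ite_lt_mul_prod_ite_lt {M : Type*} [CommMonoid M] {m : ℕ}
    (f : Fin m → Fin m → M) :
    (∏ i, ∏ j, if i < j then f i j else 1) * (∏ i, ∏ j, if i < j then f j i else 1) =
      ∏ i, ∏ j ∈ {i}ᶜ, f i j := by
  simp only [← prod_filter, filter_lt_eq_Ioi, ← prod_mul_distrib]
  exact prod_prod_Ioi_mul_eq_prod_prod_off_diag fun j i => f i j

namespace Matrix

variable {R : Type*} [CommRing R] {α β : Type*} [Fintype α] [Fintype β] [DecidableEq α]
  [DecidableEq β]

theorem det_eq_of_toBlocks₂₁_eq_zero (M : Matrix (α ⊕ β) (α ⊕ β) R)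
    (h : ∀ i j, M (.inr i) (.inl j) = 0) :
    M.det = M.toBlocks₁₁.det * M.toBlocks₂₂.det := by
  have h₂₁ : M.toBlocks₂₁ = 0 := by ext i j; exact h i j
  conv_lhs => rw [← fromBlocks_toBlocks M, h₂₁]
  exact det_fromBlocks_zero₂₁ _ _ _

theorem det_eq_of_toBlocks₁₂_eq_zero (M : Matrix (α ⊕ β) (α ⊕ β) R)
    (h : ∀ i j, M (.inl i) (.inr j) = 0) :
    M.det = M.toBlocks₁₁.det * M.toBlocks₂₂.det := by
  have h₁₂ : M.toBlocks₁₂ = 0 := by ext i j; exact h i j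
  conv_lhs => rw [← fromBlocks_toBlocks M, h₁₂]
  exact det_fromBlocks_zero₁₂ _ _ _

end Matrix

section BinaryForms

variable {R : Type*} [CommRing R] {ι : Type*} [Fintype ι] {N : ℕ} (e : ι ≃ Fin (N + 1))

def monomialMatrix (p : ι → Fin 2 → R) : Matrix ι ι R :=
  of fun r j => p r 0 ^ (e j : ℕ) * p r 1 ^ (N - e j)

def coeffMatrix (Φ : ι → MvPolynomial (Fin 2) R) : Matrix ι ι R :=
  of fun j c => coeff (Finsupp.single 0 (e j : ℕ) + Finsupp.single 1 (N - e j)) (Φ c)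

theorem monomialMatrix_mul_coeffMatrix {Φ : ι → MvPolynomial (Fin 2) R}
    (hΦ : ∀ c, (Φ c).IsHomogeneous N) (p : ι → Fin 2 → R) :
    monomialMatrix e p * coeffMatrix e Φ = of fun r c => eval (p r) (Φ c) := by
  ext r c
  rw [mul_apply, of_apply, (hΦ c).eval_fin_two, ← Fin.sum_univ_eq_sum_range
    (fun k => coeff (Finsupp.single 0 k + Finsupp.single 1 (N - k)) (Φ c) *
      (p r 0 ^ k * p r 1 ^ (N - k))), ← e.sum_comp]
  exact sum_congr rfl fun j _ => mul_comm _ _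

theorem det_monomialMatrix [DecidableEq ι] (p : ι → Fin 2 → R) :
    (monomialMatrix e p).det =
      ∏ s, ∏ t, if e s < e t then p t 0 * p s 1 - p s 0 * p t 1 else 1 := by
  have h : monomialMatrix e p =
      (projVandermonde (fun i => p (e.symm i) 0) (fun i => p (e.symm i) 1)).submatrix e e := by
    ext r j
    simp [monomialMatrix, projVandermonde_apply, Fin.val_rev]
  rw [h, det_submatrix_equiv_self, det_projVandermonde, ← e.prod_comp]
  refine prod_congr rfl fun s _ => ?_
  rw [← e.symm.prod_comp]
  simp only [Equiv.apply_symm_apply, Equiv.symm_apply_apply]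
  rw [← prod_filter]
  congr 1
  ext j
  simp

end BinaryForms

namespace QDeterminant

section CommRing

variable {R : Type*} [CommRing R] {n : ℕ}

def quadForm (c : R) : MvPolynomial (Fin 2) R :=
  (X 0 - C c * X 1) * (X 1 - C c * X 0)

theorem isHomogeneous_quadForm (c : R) : (quadForm c).IsHomogeneous 2 := by
  have h : ∀ i j : Fin 2, (X i - C c * X j : MvPolynomial (Fin 2) R).IsHomogeneous 1 :=
    fun i j => (isHomogeneous_X R i).sub (isHomogeneous_C_mul_X c j)
  exact (h 0 1).mul (h 1 0)

@[simp]
theorem eval_quadForm (c u v : R) : eval ![u, v] (quadForm c) = (u - c * v) * (v - c * u) := by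
  simp [quadForm]

abbrev Idx (n : ℕ) := Fin n ⊕ (Fin n ⊕ Fin 1)

def blockEquiv (n : ℕ) : Idx n ≃ Fin (2 * n + 1) :=
  ((Equiv.sumCongr (.refl _) finSumFinEquiv).trans finSumFinEquiv).trans (finCongr (by omega))

@[simp]
theorem blockEquiv_inl (i : Fin n) : (blockEquiv n (.inl i) : ℕ) = i := by
  simp [blockEquiv]

@[simp]
theorem blockEquiv_inr_inl (j : Fin n) : (blockEquiv n (.inr (.inl j)) : ℕ) = n + j := by
  simp [blockEquiv]

@[simp]
theorem blockEquiv_inr_inr (r : Fin 1) : (blockEquiv n (.inr (.inr r)) : ℕ) = 2 * n := by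
  simp [blockEquiv, Fin.fin_one_eq_zero r]
  omega

variable (x y a b : Fin n → R) (z : R)

def W : Matrix (Idx n) (Idx n) R :=
  monomialMatrix (blockEquiv n)
      (Sum.elim (fun i => ![x i, 1]) (Sum.elim (fun j => ![y j, 1]) fun _ => ![1, -z])) -
    diagonal (Sum.elim a (Sum.elim b 0)) *
      monomialMatrix (blockEquiv n)
        (Sum.elim (fun i => ![1, x i]) (Sum.elim (fun j => ![1, y j]) 0))

def W₀ : Matrix (Idx n) (Idx n) R :=
  monomialMatrix (blockEquiv n)
    (Sum.elim (fun j => ![1, y j]) (Sum.elim (fun j => ![y j, 1]) fun _ => ![1, -z]))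

def cofactorForm (k : Fin n) : MvPolynomial (Fin 2) R :=
  ∏ l ∈ {k}ᶜ, quadForm (y l)

/-- `X 1 + z X 0` vanishes at `(1 : -z)`, and the other quadratic factor of the `k`-th form is
chosen so that the row of `y_k` kills it; the last `n + 1` forms vanish at every `(1 : y_j)`. -/
def basisForm : Idx n → MvPolynomial (Fin 2) R :=
  Sum.elim
    (fun k => cofactorForm y k * ((X 1 + C z * X 0) *
      (C (1 + y k * z) * (X 0 - C (y k) * X 1) + C (b k * (y k + z)) * (X 1 - C (y k) * X 0))))
    (Sum.elim (fun k => cofactorForm y k * (X 1 * (X 1 - C (y k) * X 0)))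
      fun _ => ∏ l, quadForm (y l))

def cofactor (k : Fin n) : R :=
  ∏ l ∈ {k}ᶜ, (y k - y l) * (1 - y l * y k)

def scaledQ : Matrix (Fin n) (Fin n) R := of fun i k =>
  (∏ l ∈ {k}ᶜ, (x i - y l) * (1 - y l * x i)) *
    ((1 + z * x i) * ((1 + y k * z) * (x i - y k) + b k * (y k + z) * (1 - y k * x i)) -
      a i * ((x i + z) * ((1 + y k * z) * (1 - y k * x i) + b k * (y k + z) * (x i - y k))))

def vandermondeFactor : R :=
  ∏ k, cofactor y k * ((y k + z) * (1 + y k * z) * (1 - y k * y k))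

def lowerBlockDet : R :=
  (∏ k, cofactor y k * (1 - y k * y k)) * ∏ l, (1 + y l * z) * (-z - y l)

theorem isHomogeneous_cofactorForm (k : Fin n) :
    (cofactorForm y k).IsHomogeneous (2 * (n - 1)) := by
  have h := IsHomogeneous.prod {k}ᶜ _ (fun _ => 2) fun l _ => isHomogeneous_quadForm (y l)
  simpa [cofactorForm, card_compl, mul_comm] using h

theorem isHomogeneous_basisForm (c : Idx n) : (basisForm y b z c).IsHomogeneous (2 * n) := by
  have lin : ∀ (i j : Fin 2) (c : R),
      (X i + C c * X j : MvPolynomial (Fin 2) R).IsHomogeneous 1 := fun i j c =>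
    (isHomogeneous_X R i).add (isHomogeneous_C_mul_X c j)
  have lin' : ∀ (i j : Fin 2) (c : R),
      (X i - C c * X j : MvPolynomial (Fin 2) R).IsHomogeneous 1 := fun i j c =>
    (isHomogeneous_X R i).sub (isHomogeneous_C_mul_X c j)
  rcases c with k | k | _
  · have hk : 2 * n = 2 * (n - 1) + (1 + (0 + 1)) := by have := k.pos; omega
    rw [hk]
    exact (isHomogeneous_cofactorForm y k).mul ((lin 1 0 z).mul
      (((isHomogeneous_C _ _).mul (lin' 0 1 _)).add ((isHomogeneous_C _ _).mul (lin' 1 0 _))))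
  · have hk : 2 * n = 2 * (n - 1) + (1 + 1) := by have := k.pos; omega
    rw [hk]
    exact (isHomogeneous_cofactorForm y k).mul ((isHomogeneous_X R 1).mul (lin' 1 0 _))
  · have h := IsHomogeneous.prod univ _ (fun _ => 2) fun l _ => isHomogeneous_quadForm (y l)
    simpa [basisForm, mul_comm] using h

theorem eval_cofactorForm (k : Fin n) (u v : R) :
    eval ![u, v] (cofactorForm y k) = ∏ l ∈ {k}ᶜ, (u - y l * v) * (v - y l * u) := by
  simp [cofactorForm]

theorem eval_cofactorForm_one_left (k : Fin n) (u : R) :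
    eval ![1, u] (cofactorForm y k) = eval ![u, 1] (cofactorForm y k) := by
  simp only [eval_cofactorForm]
  exact prod_congr rfl fun l _ => by ring

theorem eval_cofactorForm_self (k : Fin n) : eval ![y k, 1] (cofactorForm y k) = cofactor y k := by
  simp [eval_cofactorForm, cofactor]

variable {y} in
theorem eval_cofactorForm_of_ne {j k : Fin n} (h : j ≠ k) {p : Fin 2 → R}
    (hp : eval p (quadForm (y j)) = 0) : eval p (cofactorForm y k) = 0 := by
  rw [cofactorForm, map_prod]
  exact prod_eq_zero (by simpa using h) hp

theorem eval_basisForm_inr_one_y (j : Fin n) (c : Fin n ⊕ Fin 1) :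
    eval ![1, y j] (basisForm y b z (.inr c)) = 0 := by
  rcases c with k | _
  · by_cases hjk : j = k
    · subst hjk
      simp [basisForm]
    · simp [basisForm, eval_cofactorForm_of_ne hjk]
  · simp [basisForm, prod_eq_zero (mem_univ j)]

theorem det_eval_basisForm_inr :
    (of fun r c => eval (Sum.elim (fun j => ![y j, 1]) (fun _ => ![1, -z]) r)
        (basisForm y b z (.inr c))).det = lowerBlockDet y z := by
  rw [det_eq_of_toBlocks₁₂_eq_zero, lowerBlockDet]
  · congr 1
    · rw [← det_diagonal]
      congr 1
      ext j k
      by_cases hjk : j = k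
      · subst hjk
        simp [toBlocks₁₁, basisForm, eval_cofactorForm_self]
      · simp [toBlocks₁₁, basisForm, eval_cofactorForm_of_ne hjk, hjk]
    · simp [det_unique, toBlocks₂₂, basisForm]
  · intro j r
    simp [basisForm, prod_eq_zero (mem_univ j)]

theorem W_mul_coeffMatrix :
    W x y a b z * coeffMatrix (blockEquiv n) (basisForm y b z) = of fun r c =>
      eval (Sum.elim (fun i => ![x i, 1]) (Sum.elim (fun j => ![y j, 1]) fun _ => ![1, -z]) r)
          (basisForm y b z c) -
        Sum.elim a (Sum.elim b 0) r *
          eval (Sum.elim (fun i => ![1, x i]) (Sum.elim (fun j => ![1, y j]) 0) r)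
            (basisForm y b z c) := by
  rw [W, sub_mul, Matrix.mul_assoc,
    monomialMatrix_mul_coeffMatrix _ (isHomogeneous_basisForm y b z),
    monomialMatrix_mul_coeffMatrix _ (isHomogeneous_basisForm y b z)]
  ext r c
  simp [diagonal_mul]

theorem det_W_mul_coeffMatrix :
    (W x y a b z * coeffMatrix (blockEquiv n) (basisForm y b z)).det =
      (scaledQ x y a b z).det * lowerBlockDet y z := by
  rw [W_mul_coeffMatrix, det_eq_of_toBlocks₂₁_eq_zero, ← det_eval_basisForm_inr y b z]
  · congr 2
    · ext i k
      simp only [toBlocks₁₁, of_apply, basisForm, Sum.elim_inl, map_mul,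
        eval_cofactorForm_one_left]
      simp [scaledQ, eval_cofactorForm]
      ring
    · ext (j | r) c <;> simp [toBlocks₂₂, eval_basisForm_inr_one_y]
  · rintro (j | r) k
    · by_cases hjk : j = k
      · subst hjk
        simp [basisForm, eval_cofactorForm_one_left]
        ring
      · simp [basisForm, eval_cofactorForm_of_ne hjk]
    · simp [basisForm]

theorem det_W₀_mul_coeffMatrix :
    (W₀ y z * coeffMatrix (blockEquiv n) (basisForm y b z)).det =
      vandermondeFactor y z * lowerBlockDet y z := by
  rw [W₀, monomialMatrix_mul_coeffMatrix _ (isHomogeneous_basisForm y b z),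
    det_eq_of_toBlocks₁₂_eq_zero, ← det_eval_basisForm_inr y b z, vandermondeFactor]
  · congr 2
    rw [← det_diagonal]
    congr 1
    ext j k
    by_cases hjk : j = k
    · subst hjk
      simp [toBlocks₁₁, basisForm, eval_cofactorForm_one_left, eval_cofactorForm_self]
      ring
    · simp [toBlocks₁₁, basisForm, eval_cofactorForm_of_ne hjk, hjk]
  · intro j c
    simpa using eval_basisForm_inr_one_y y b z j c

theorem prod_prod_mul_sub_one :
    ∏ i, ∏ j, (y j * y i - 1) =
      (-1) ^ n * ∏ i, (1 - y i * y i) * ∏ j ∈ {i}ᶜ, (1 - y j * y i) := by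
  have hsign : ((-1 : R) ^ n) ^ n = (-1) ^ n := by
    rcases neg_one_pow_eq_or R n with h | h <;> simp [h]
  have hrow : ∀ i, ∏ j, (y j * y i - 1) = (-1) ^ n * ∏ j, (1 - y j * y i) := fun i => by
    rw [← Fin.prod_const, ← prod_mul_distrib]
    exact prod_congr rfl fun j _ => by ring
  simp only [hrow, prod_mul_distrib, prod_const, card_univ, Fintype.card_fin, hsign]
  rw [← prod_mul_distrib]
  exact congrArg _ (prod_congr rfl fun i _ => Fintype.prod_eq_mul_prod_compl i _)

theorem det_W₀ : (W₀ y z).det = (-1) ^ n * vandermondeFactor y z := by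
  rw [W₀, det_monomialMatrix]
  simp only [Fintype.prod_sum_type, Sum.elim_inl, Sum.elim_inr, Fin.lt_def, blockEquiv_inl,
    blockEquiv_inr_inl, blockEquiv_inr_inr]
  simp (disch := omega) only [if_pos, if_neg]
  simp only [cons_val_zero, cons_val_one, prod_const_one, one_mul, mul_one, add_lt_add_iff_left,
    Fin.val_fin_lt, Fintype.prod_unique, sub_neg_eq_add, mul_neg, prod_mul_distrib]
  rw [prod_prod_mul_sub_one, vandermondeFactor]
  simp only [cofactor, prod_mul_distrib]
  rw [← prod_ite_lt_mul_prod_ite_lt fun i j => y i - y j]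
  ring

theorem det_W_mul_eq :
    (W x y a b z).det * (vandermondeFactor y z * lowerBlockDet y z) =
      (-1) ^ n * (scaledQ x y a b z).det * (vandermondeFactor y z * lowerBlockDet y z) := by
  set V := coeffMatrix (blockEquiv n) (basisForm y b z)
  calc _ = (W x y a b z).det * (W₀ y z * V).det := by rw [det_W₀_mul_coeffMatrix]
    _ = (W₀ y z).det * (W x y a b z * V).det := by simp only [det_mul]; ring
    _ = _ := by rw [det_W₀, det_W_mul_coeffMatrix]; ring

theorem det_scaledQ_eq_of_injective [IsDomain R] (hy : Function.Injective y)
    (hyy : ∀ k l, y k * y l ≠ 1) (hyz : ∀ k, y k + z ≠ 0)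
    (hyz' : ∀ k, 1 + y k * z ≠ 0) :
    (scaledQ x y a b z).det = (-1) ^ n * (W x y a b z).det := by
  have hcof : ∀ k, cofactor y k ≠ 0 := fun k =>
    prod_ne_zero_iff.mpr fun l hl => mul_ne_zero
      (sub_ne_zero.mpr (hy.ne (by simpa [eq_comm] using hl)))
      (sub_ne_zero.mpr (hyy l k).symm)
  have hy2 : ∀ k, 1 - y k * y k ≠ 0 := fun k => sub_ne_zero.mpr (hyy k k).symm
  have hzy : ∀ k, -z - y k ≠ 0 := fun k h => hyz k (by linear_combination -h)
  have hne : vandermondeFactor y z * lowerBlockDet y z ≠ 0 := by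
    simp [vandermondeFactor, lowerBlockDet, prod_eq_zero_iff, *]
  rw [mul_right_cancel₀ hne (det_W_mul_eq x y a b z), ← mul_assoc, ← mul_pow]
  simp

end CommRing

section Specialization

variable {R S : Type*} [CommRing R] [CommRing S] {n : ℕ} (x y a b : Fin n → R) (z : R)

theorem map_scaledQ (f : R →+* S) :
    (scaledQ x y a b z).map f = scaledQ (f ∘ x) (f ∘ y) (f ∘ a) (f ∘ b) (f z) := by
  ext i k
  simp [scaledQ, map_prod]

theorem map_W (f : R →+* S) :
    (W x y a b z).map f = W (f ∘ x) (f ∘ y) (f ∘ a) (f ∘ b) (f z) := by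
  ext (i | j | r) c <;> simp [W, monomialMatrix, diagonal_mul]

theorem det_scaledQ_eq [IsDomain R] :
    (scaledQ x y a b z).det = (-1) ^ n * (W x y a b z).det := by
  have h := det_scaledQ_eq_of_injective (C ∘ x) X (C ∘ a) (C ∘ b) (C z) (X_injective (R := R))
    (fun k l h => by simpa using congrArg (eval 0) h)
    (fun k h => by simpa using congrArg (eval fun _ => 1 - z) h)
    (fun k h => by simpa using congrArg (eval 0) h)
  have := congrArg (eval y) h
  rw [RingHom.map_det, map_mul, map_pow, map_neg, map_one, RingHom.map_det,
    RingHom.mapMatrix_apply, RingHom.mapMatrix_apply, map_scaledQ, map_W] at this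
  simpa [Function.comp_def] using this

end Specialization

section Field

variable {K : Type*} [Field K] {n : ℕ}

theorem qfun_mul_denominator {x y : K} (z a b : K) (hxy : x ≠ y) (hxy1 : x * y ≠ 1) :
    qfun x y z a b * ((x - y) * (1 - x * y)) =
      (1 + z * x) * ((1 + y * z) * (x - y) + b * (y + z) * (1 - y * x)) -
        a * ((x + z) * ((1 + y * z) * (1 - y * x) + b * (y + z) * (x - y))) := by
  have h1 : x - y ≠ 0 := sub_ne_zero.mpr hxy
  have h2 : 1 - x * y ≠ 0 := sub_ne_zero.mpr hxy1.symm
  rw [qfun]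
  field_simp
  ring

theorem det_scaledQ_eq_prod_mul_det {x y : Fin n → K} (a b : Fin n → K) (z : K)
    (hxy : ∀ i j, x i ≠ y j) (hxy1 : ∀ i j, x i * y j ≠ 1) :
    (scaledQ x y a b z).det = (∏ i, ∏ j, (x i - y j) * (1 - x i * y j)) *
      (of fun i j => qfun (x i) (y j) z (a i) (b j)).det := by
  rw [← det_mul_column]
  congr 1
  ext i k
  have hc : ∏ l ∈ {k}ᶜ, (x i - y l) * (1 - y l * x i) =
      ∏ l ∈ {k}ᶜ, (x i - y l) * (1 - x i * y l) :=
    prod_congr rfl fun l _ => by ring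
  rw [scaledQ, of_apply, of_apply, of_apply, Fintype.prod_eq_mul_prod_compl k, hc,
    ← qfun_mul_denominator z (a i) (b k) (hxy i k) (hxy1 i k)]
  ring

end Field

end QDeterminant

end

/-- `det(q(x_i,y_j,z,a_i,b_j)) = (−1)^n / ∏_{i,j}(x_i−y_j)(1−x_i y_j) · det W`. -/
theorem det_q_eq_det_W {K : Type*} [Field K] (n : ℕ) (x y a b : Fin n → K) (z : K)
    (hxy : ∀ i j, x i ≠ y j) (hxy1 : ∀ i j, x i * y j ≠ 1) :
    (Matrix.of fun i j : Fin n => qfun (x i) (y j) z (a i) (b j)).det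
      = (-1 : K) ^ n / (∏ i, ∏ j, (x i - y j) * (1 - x i * y j)) *
        (Matrix.of fun i j : Fin (2 * n + 1) =>
          if h : (i : ℕ) < n then
            x ⟨i, h⟩ ^ (j : ℕ) - a ⟨i, h⟩ * x ⟨i, h⟩ ^ (2 * n - (j : ℕ))
          else if h2 : (i : ℕ) < 2 * n then
            y ⟨(i : ℕ) - n, by omega⟩ ^ (j : ℕ)
              - b ⟨(i : ℕ) - n, by omega⟩ * y ⟨(i : ℕ) - n, by omega⟩ ^ (2 * n - (j : ℕ))
          else (-z) ^ (2 * n - (j : ℕ))).det := by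
  have hP : ∏ i, ∏ j, (x i - y j) * (1 - x i * y j) ≠ 0 :=
    prod_ne_zero_iff.mpr fun i _ => prod_ne_zero_iff.mpr fun j _ =>
      mul_ne_zero (sub_ne_zero.mpr (hxy i j)) (sub_ne_zero.mpr (hxy1 i j).symm)
  rw [div_mul_eq_mul_div, eq_div_iff hP, mul_comm,
    ← QDeterminant.det_scaledQ_eq_prod_mul_det a b z hxy hxy1, QDeterminant.det_scaledQ_eq,
    ← det_submatrix_equiv_self (QDeterminant.blockEquiv n)]
  congr 2
  ext (i | j | r) c <;> simp [QDeterminant.W, monomialMatrix] <;> intro h <;> omega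
end

section
/- Fix n variables x₁,…,x_n and set x̄_i = x_i^{−1}, ζ_j(p) = x_j^p − x̄_j^p, and H̄_r = h_r(x₁,…,x_n, x̄₁,…,x̄_n) (complete homogeneous symmetric in the 2n variables). Then for any integer l ≥ 0 and any 1 ≤ j ≤ n, ζ_j(l) equals the product of the 1×n row vector ( H̄_{l−n}, (H̄_{l−n−1+k} + H̄_{l−n+1−k})_{2≤k≤n} ), the n×n matrix ( (−1)^{v−u} e_{v−u}(x₁,…,x_n,x̄₁,…,x̄_n) )_{1≤u,v≤n}, and the n×1 column vector ( ζ_j(n+1−u) )_{1≤u≤n}. -/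
/-- Complete homogeneous symmetric polynomial of degree `p` of a family `y`. -/
noncomputable def hsym {K : Type*} [CommRing K] {m : ℕ} (y : Fin m → K) (p : ℕ) : K :=
  ∑ s : Sym (Fin m) p, (s.1.map y).prod

/-- `h_r` with integer index, vanishing for `r < 0`. -/
noncomputable def hInt {K : Type*} [CommRing K] {m : ℕ} (y : Fin m → K) (r : ℤ) : K :=
  if r < 0 then 0 else hsym y r.toNat

/-- `e_r` with integer index, vanishing for `r < 0`. -/
noncomputable def eInt {K : Type*} [CommRing K] {m : ℕ} (y : Fin m → K) (r : ℤ) : K :=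
  if r < 0 then 0
  else ∑ s ∈ Finset.powersetCard r.toNat (Finset.univ : Finset (Fin m)), ∏ t ∈ s, y t

/-- The family of `2n` variables `(x₁,…,x_n, x₁⁻¹,…,x_n⁻¹)`. -/
noncomputable def xxbar {K : Type*} [Field K] (n : ℕ) (x : Fin n → K) : Fin (2 * n) → K :=
  fun t => if h : (t : ℕ) < n then x ⟨t, h⟩ else (x ⟨(t : ℕ) - n, by omega⟩)⁻¹

/-!
Write `y = (x, x̄)`, `E(t) = ∏ (1 - y t) = ∑ (-1)ʳ eᵣ tʳ` and `H(t) = ∑ H̄ᵣ tʳ`, so that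
`E H = 1`. Since `(1 - x_j t)(1 - x̄_j t) ∑ ζ_j(p) tᵖ = (x_j - x̄_j) t`, the series
`E(t) ∑ ζ_j(p) tᵖ` is `t F(t)` with `F = (x_j - x̄_j) ∏_{i ≠ j} (1 - x_i t)(1 - x̄_i t)`,
a palindromic polynomial of degree `2n - 2`. The matrix times the column is therefore the vector
`(F_{n-1-u})_u`, and palindromy folds the row-vector product into `∑ᵣ H̄_{l-1-r} Fᵣ`, the
coefficient of `tˡ` in `H(t) t F(t) = ∑ ζ_j(p) tᵖ`.
-/

open Finset Polynomial

section GeneratingFunctions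

variable {R : Type*} [CommRing R] {m : ℕ}

noncomputable def ePoly (y : Fin m → R) : R[X] := ∏ i, (1 - C (y i) * X)

noncomputable def hSeries (y : Fin m → R) : PowerSeries R :=
  ∏ i, PowerSeries.mk fun p => y i ^ p

lemma coeff_ePoly (y : Fin m → R) (k : ℕ) : (ePoly y).coeff k = (-1) ^ k * eInt y k := by
  have expand : ePoly y = ∑ t ∈ univ.powerset, C ((-1) ^ #t * ∏ i ∈ t, y i) * X ^ #t := by
    simp_rw [ePoly, sub_eq_add_neg, add_comm (1 : R[X]), prod_add_one]
    refine sum_congr rfl fun t _ => ?_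
    rw [map_mul, map_prod, map_pow, map_neg, map_one, ← prod_const, ← prod_const,
      ← prod_mul_distrib, ← prod_mul_distrib]
    exact prod_congr rfl fun i _ => by ring
  simp only [expand, finsetSum_coeff, coeff_C_mul_X_pow, eInt, Nat.cast_nonneg, not_lt.2,
    if_false, Int.toNat_natCast, mul_sum]
  rw [← sum_filter, powersetCard_eq_filter]
  exact sum_congr (filter_congr fun t _ => eq_comm) fun t ht => by rw [(mem_filter.1 ht).2]

lemma coeff_hSeries (y : Fin m → R) (k : ℕ) : PowerSeries.coeff k (hSeries y) = hsym y k := by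
  simp only [hSeries, PowerSeries.coeff_prod, PowerSeries.coeff_mk, hsym]
  have card_eq {f : Fin m →₀ ℕ} (hf : f ∈ finsuppAntidiag univ k) :
      Multiset.card (Finsupp.toMultiset f) = k := by
    rw [Finsupp.card_toMultiset, Finsupp.sum_fintype _ _ fun _ => rfl]
    exact (mem_finsuppAntidiag.1 hf).1
  refine sum_bij' (fun f hf => ⟨Finsupp.toMultiset f, card_eq hf⟩)
    (fun s _ => Multiset.toFinsupp s.1) (fun _ _ => mem_univ _) (fun s _ => ?_)
    (fun f _ => Finsupp.toMultiset_toFinsupp f)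
    (fun s _ => Subtype.ext (Multiset.toFinsupp_toMultiset s.1)) (fun f _ => ?_)
  · have hs := s.2
    rw [← Multiset.toFinsupp_toMultiset s.1, Finsupp.card_toMultiset,
      Finsupp.sum_fintype _ _ fun _ => rfl] at hs
    exact mem_finsuppAntidiag.2 ⟨hs, subset_univ _⟩
  · rw [prod_multiset_map_count, Finsupp.toFinset_toMultiset,
      ← Finsupp.prod_fintype f _ fun _ => pow_zero _]
    simp only [Finsupp.count_toMultiset, Finsupp.prod]

lemma coeff_hSeries_mul_X_pow (y : Fin m → R) (l k : ℕ) :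
    PowerSeries.coeff l (hSeries y * PowerSeries.X ^ k) = hInt y ((l : ℤ) - k) := by
  rw [PowerSeries.coeff_mul_X_pow', hInt]
  split_ifs with h1 h2 h2
  · omega
  · rw [coeff_hSeries]; congr; omega
  · rfl
  · omega

lemma coeff_hSeries_mul_X_mul_coe (y : Fin m → R) (l : ℕ) {F : R[X]} {N : ℕ}
    (hF : F.natDegree < N) :
    PowerSeries.coeff l (hSeries y * (PowerSeries.X * (F : PowerSeries R)))
      = ∑ r ∈ range N, hInt y ((l : ℤ) - (r + 1 : ℕ)) * F.coeff r := by
  conv_lhs => rw [as_sum_range_C_mul_X_pow' F hF, ← Polynomial.coeToPowerSeries.ringHom_apply,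
    map_sum, mul_sum, mul_sum, map_sum]
  refine sum_congr rfl fun r _ => ?_
  simp only [Polynomial.coeToPowerSeries.ringHom_apply, Polynomial.coe_mul, Polynomial.coe_C,
    Polynomial.coe_pow, Polynomial.coe_X]
  rw [show hSeries y * (PowerSeries.X * (PowerSeries.C (F.coeff r) * PowerSeries.X ^ r))
      = PowerSeries.C (F.coeff r) * (hSeries y * PowerSeries.X ^ (r + 1)) by ring,
    PowerSeries.coeff_C_mul, coeff_hSeries_mul_X_pow, mul_comm]

lemma one_sub_C_mul_X_mul_mk_pow (a : R) :
    (1 - PowerSeries.C a * PowerSeries.X) * PowerSeries.mk (fun p => a ^ p) = 1 := by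
  simpa [mul_comm, PowerSeries.rescale_mk] using
    congrArg (PowerSeries.rescale a) (PowerSeries.mk_one_mul_one_sub_eq_one (S := R))

lemma coe_ePoly_mul_hSeries (y : Fin m → R) : (ePoly y : PowerSeries R) * hSeries y = 1 := by
  rw [ePoly, hSeries, ← Polynomial.coeToPowerSeries.ringHom_apply, map_prod, ← prod_mul_distrib]
  refine prod_eq_one fun i _ => ?_
  simpa using one_sub_C_mul_X_mul_mk_pow (y i)

lemma one_sub_mul_one_sub_mul_mk_pow_sub_pow (a b : R) :
    (1 - PowerSeries.C a * PowerSeries.X) * (1 - PowerSeries.C b * PowerSeries.X)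
      * PowerSeries.mk (fun p => a ^ p - b ^ p) = PowerSeries.C (a - b) * PowerSeries.X := by
  have hmk : PowerSeries.mk (fun p => a ^ p - b ^ p)
      = PowerSeries.mk (fun p => a ^ p) - PowerSeries.mk (fun p => b ^ p) := by
    ext; simp
  rw [hmk, map_sub]
  linear_combination (1 - PowerSeries.C b * PowerSeries.X) * one_sub_C_mul_X_mul_mk_pow a
    - (1 - PowerSeries.C a * PowerSeries.X) * one_sub_C_mul_X_mul_mk_pow b

end GeneratingFunctions

section Palindromic

variable {R : Type*} [CommRing R] {ι : Type*}

lemma natDegree_prod_le_card_mul (s : Finset ι) (f : ι → R[X]) {d : ℕ}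
    (hdeg : ∀ i ∈ s, (f i).natDegree ≤ d) : (∏ i ∈ s, f i).natDegree ≤ #s * d :=
  (natDegree_prod_le _ _).trans <| by simpa using sum_le_card_nsmul s _ d hdeg

lemma reflect_prod (s : Finset ι) (f : ι → R[X]) {d : ℕ}
    (hdeg : ∀ i ∈ s, (f i).natDegree ≤ d) (hf : ∀ i ∈ s, reflect d (f i) = f i) :
    reflect (#s * d) (∏ i ∈ s, f i) = ∏ i ∈ s, f i := by
  classical
  induction s using Finset.induction_on with
  | empty => simp
  | insert a s ha ih =>
    have hdeg_s := natDegree_prod_le_card_mul s f fun i hi => hdeg i (mem_insert_of_mem hi)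
    rw [prod_insert ha, card_insert_of_notMem ha, add_comm, add_mul, one_mul,
      reflect_mul _ _ (hdeg a (mem_insert_self a s)) hdeg_s, hf a (mem_insert_self a s),
      ih (fun i hi => hdeg i (mem_insert_of_mem hi)) (fun i hi => hf i (mem_insert_of_mem hi))]

lemma natDegree_one_sub_mul_one_sub_le (a b : R) :
    ((1 - C a * X) * (1 - C b * X)).natDegree ≤ 2 := by
  compute_degree

lemma reflect_one_sub_mul_one_sub {a b : R} (hab : a * b = 1) :
    reflect 2 ((1 - C a * X) * (1 - C b * X)) = (1 - C a * X) * (1 - C b * X) := by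
  have hlin (c : R) : (1 - C c * X).natDegree ≤ 1 := by compute_degree
  have hC : C a * C b = 1 := by rw [← C_mul, hab, C_1]
  rw [reflect_mul _ _ (hlin a) (hlin b)]
  simp only [reflect_sub, reflect_one, reflect_C_mul, reflect_one_X, pow_one]
  linear_combination (1 - X ^ 2) * hC

end Palindromic

section Sums

variable {R : Type*} [CommRing R]

lemma sum_fin_shift_eq_sum_antidiagonal {f : ℤ → R} (hf : ∀ s < 0, f s = 0) {g : ℕ → R}
    (hg : g 0 = 0) {n u : ℕ} (hu : u ≤ n) :
    ∑ v : Fin n, f ((v : ℕ) - (u : ℤ)) * g (n - v)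
      = ∑ p ∈ antidiagonal (n - u), f p.1 * g p.2 := by
  rw [Nat.sum_antidiagonal_eq_sum_range_succ_mk, sum_range_succ, Nat.sub_self, hg, mul_zero,
    add_zero, Fin.sum_univ_eq_sum_range (fun v => f ((v : ℤ) - u) * g (n - v)),
    ← Nat.add_sub_cancel' hu, sum_range_add, Nat.add_sub_cancel_left]
  rw [sum_eq_zero fun v hv => by rw [hf _ (by simp at hv; omega), zero_mul], zero_add]
  refine sum_congr rfl fun s _ => ?_
  rw [Nat.cast_add, add_sub_cancel_left, Nat.add_sub_cancel' hu, Nat.sub_sub]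

lemma sum_range_fold (h : ℤ → R) (c : ℕ → R) (t : ℤ) {n : ℕ}
    (hc : ∀ k < n, c (n - 1 - k) = c (n - 1 + k)) :
    ∑ k ∈ range n, (if k = 0 then h t else h (t + k) + h (t - k)) * c (n - 1 - k)
      = ∑ r ∈ range (2 * n - 1), h (t + (n - 1 : ℕ) - r) * c r := by
  obtain _ | n := n
  · simp
  simp only [Nat.add_sub_cancel] at hc ⊢
  have lower : ∑ r ∈ range (n + 1), h (t + n - r) * c r
      = h t * c n + ∑ k ∈ range n, h (t + (k + 1 : ℕ)) * c (n - (k + 1)) := by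
    rw [← sum_range_reflect, sum_range_succ', add_comm]
    simp only [Nat.add_sub_cancel, Nat.sub_zero, add_sub_cancel_right]
    congr 1
    refine sum_congr rfl fun k hk => ?_
    rw [mem_range] at hk
    congr 2
    push_cast [show k + 1 ≤ n by omega]
    ring
  have upper : ∑ k ∈ range n, h (t + n - (n + 1 + k : ℕ)) * c (n + 1 + k)
      = ∑ k ∈ range n, h (t - (k + 1 : ℕ)) * c (n - (k + 1)) := by
    refine sum_congr rfl fun k hk => ?_
    rw [mem_range] at hk
    rw [show n + 1 + k = n + (k + 1) by omega, ← hc (k + 1) (by omega)]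
    congr 2
    push_cast
    ring
  rw [show 2 * (n + 1) - 1 = (n + 1) + n by omega, sum_range_add _ (n + 1) n, lower, upper,
    sum_range_succ', if_pos rfl, Nat.sub_zero]
  simp only [Nat.add_one_ne_zero, if_false, add_mul, sum_add_distrib]
  ring

end Sums

section xxbar

variable {K : Type*} [Field K] {n : ℕ}

lemma prod_xxbar {M : Type*} [CommMonoid M] (x : Fin n → K) (f : K → M) :
    ∏ t, f (xxbar n x t) = ∏ i, f (x i) * f (x i)⁻¹ := by
  rw [← (finCongr (two_mul n)).symm.prod_comp, Fin.prod_univ_add, prod_mul_distrib]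
  congr 1 <;> refine prod_congr rfl fun i _ => ?_ <;> simp [xxbar]

noncomputable def eZetaPoly (x : Fin n → K) (j : Fin n) : K[X] :=
  C (x j - (x j)⁻¹) * ∏ i ∈ univ.erase j, (1 - C (x i) * X) * (1 - C (x i)⁻¹ * X)

lemma coe_ePoly_xxbar_mul_mk (x : Fin n → K) (j : Fin n) :
    (ePoly (xxbar n x) : PowerSeries K) * PowerSeries.mk (fun p => x j ^ p - (x j)⁻¹ ^ p)
      = PowerSeries.X * (eZetaPoly x j : PowerSeries K) := by
  rw [ePoly, prod_xxbar x fun a => 1 - C a * X, ← mul_prod_erase univ _ (mem_univ j), eZetaPoly]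
  simp only [Polynomial.coe_mul, Polynomial.coe_sub, Polynomial.coe_one, Polynomial.coe_C,
    Polynomial.coe_X]
  linear_combination
    ((∏ i ∈ univ.erase j, (1 - C (x i) * X) * (1 - C (x i)⁻¹ * X) : K[X]) : PowerSeries K)
      * one_sub_mul_one_sub_mul_mk_pow_sub_pow (x j) (x j)⁻¹

lemma hSeries_mul_X_mul_eZetaPoly (x : Fin n → K) (j : Fin n) :
    hSeries (xxbar n x) * (PowerSeries.X * (eZetaPoly x j : PowerSeries K))
      = PowerSeries.mk (fun p => x j ^ p - (x j)⁻¹ ^ p) := by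
  rw [← coe_ePoly_xxbar_mul_mk, ← mul_assoc, mul_comm (hSeries _), coe_ePoly_mul_hSeries, one_mul]

lemma natDegree_eZetaPoly_lt (x : Fin n → K) (j : Fin n) :
    (eZetaPoly x j).natDegree < 2 * n - 1 := by
  have := natDegree_prod_le_card_mul (univ.erase j) _ fun i _ =>
    natDegree_one_sub_mul_one_sub_le (x i) (x i)⁻¹
  rw [card_erase_of_mem (mem_univ j), card_univ, Fintype.card_fin] at this
  have hn : 0 < n := j.pos
  exact (natDegree_C_mul_le _ _).trans_lt (by omega)

lemma coeff_eZetaPoly_symm {x : Fin n → K} (hx : ∀ i, x i ≠ 0) (j : Fin n) {k : ℕ} (hk : k < n) :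
    (eZetaPoly x j).coeff (n - 1 - k) = (eZetaPoly x j).coeff (n - 1 + k) := by
  have hrefl := reflect_prod (univ.erase j) _
    (fun i _ => natDegree_one_sub_mul_one_sub_le (x i) (x i)⁻¹)
    (fun i _ => reflect_one_sub_mul_one_sub (mul_inv_cancel₀ (hx i)))
  rw [card_erase_of_mem (mem_univ j), card_univ, Fintype.card_fin] at hrefl
  rw [eZetaPoly, coeff_C_mul, coeff_C_mul]
  conv_lhs => rw [← hrefl]
  rw [coeff_reflect, revAt_le (by omega),
    show (n - 1) * 2 - (n - 1 - k) = n - 1 + k by omega]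

lemma sum_eInt_xxbar_mul_zeta (x : Fin n → K) (j u : Fin n) :
    ∑ v : Fin n, (-1 : K) ^ (((v : ℕ) : ℤ) - ((u : ℕ) : ℤ))
        * eInt (xxbar n x) (((v : ℕ) : ℤ) - ((u : ℕ) : ℤ))
        * (x j ^ (n - (v : ℕ)) - (x j)⁻¹ ^ (n - (v : ℕ)))
      = (eZetaPoly x j).coeff (n - 1 - u) := by
  have key := congrArg (PowerSeries.coeff (n - 1 - u + 1)) (coe_ePoly_xxbar_mul_mk x j)
  rw [PowerSeries.coeff_mul, PowerSeries.coeff_succ_X_mul, Polynomial.coeff_coe,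
    show n - 1 - u + 1 = n - u by omega] at key
  rw [← key]
  refine (sum_fin_shift_eq_sum_antidiagonal (f := fun s => (-1 : K) ^ s * eInt (xxbar n x) s)
    (g := fun p => x j ^ p - (x j)⁻¹ ^ p) (fun s hs => by simp [eInt, hs]) (by simp)
    u.is_lt.le).trans (sum_congr rfl fun p _ => ?_)
  rw [Polynomial.coeff_coe, coeff_ePoly, PowerSeries.coeff_mk, zpow_natCast]

end xxbar

/-- Fulton–Harris Lemma A.54: `ζ_j(l) = x_j^l − x_j^{−l}` equals the product of the row vector
`(H̄_{l−n}, (H̄_{l−n−1+k} + H̄_{l−n+1−k})_{2≤k≤n})`, the matrix `((−1)^{v−u} e_{v−u})_{u,v}`,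
and the column vector `(ζ_j(n+1−u))_u`, where `H̄_r = h_r(x, x̄)` and `e_r = e_r(x, x̄)`. -/
theorem fulton_harris_A54 {K : Type*} [Field K] (n : ℕ) (x : Fin n → K)
    (hx : ∀ i, x i ≠ 0) (l : ℕ) (j : Fin n) :
    x j ^ l - (x j)⁻¹ ^ l
      = ((Matrix.of fun _ : Fin 1 => fun k : Fin n =>
            if (k : ℕ) = 0 then hInt (xxbar n x) ((l : ℤ) - n)
            else hInt (xxbar n x) ((l : ℤ) - n + (k : ℕ))
              + hInt (xxbar n x) ((l : ℤ) - n - (k : ℕ))) *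
          (Matrix.of fun u v : Fin n =>
            (-1 : K) ^ (((v : ℕ) : ℤ) - ((u : ℕ) : ℤ)) *
              eInt (xxbar n x) (((v : ℕ) : ℤ) - ((u : ℕ) : ℤ))) *
          (Matrix.of fun u : Fin n => fun _ : Fin 1 =>
            x j ^ (n - (u : ℕ)) - (x j)⁻¹ ^ (n - (u : ℕ)))) 0 0 := by
  rw [Matrix.mul_assoc]
  simp only [Matrix.mul_apply, Matrix.of_apply, sum_eInt_xxbar_mul_zeta]
  rw [Fin.sum_univ_eq_sum_range (fun k => (if k = 0 then hInt (xxbar n x) ((l : ℤ) - n)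
      else hInt (xxbar n x) ((l : ℤ) - n + k) + hInt (xxbar n x) ((l : ℤ) - n - k))
      * (eZetaPoly x j).coeff (n - 1 - k)) n,
    sum_range_fold _ _ _ fun k hk => coeff_eZetaPoly_symm hx j hk,
    ← PowerSeries.coeff_mk l fun p => x j ^ p - (x j)⁻¹ ^ p, ← hSeries_mul_X_mul_eZetaPoly,
    coeff_hSeries_mul_X_mul_coe _ _ (natDegree_eZetaPoly_lt x j)]
  have hn : 0 < n := j.pos
  refine sum_congr rfl fun r _ => ?_
  congr 2
  omega
end

section
/- Let λ be a partition of length ℓ with ℓ > n and λ_{n+1} = … = λ_ℓ = 1 (and λ₁,…,λ_n arbitrary parts ≥ 1). Then for one odd variable y, spo_λ(x₁,…,x_n; y) = (y^{ℓ−n}/D)·det( x_i^{μ_j+n−j+1} − x̄_i^{μ_j+n−j+1} + y(x_i^{μ_j+n−j} − x̄_i^{μ_j+n−j}) )_{1≤i,j≤n}, where μ = (λ₁,…,λ_n) and D = ∏_{i=1}^n (x_i − x̄_i) ∏_{1≤i<j≤n} (x_i + x̄_i − x_j − x̄_j). -/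
/-- The symplectic Schur function `sp_λ(x₁,…,x_n)` via the Weyl character formula. -/
noncomputable def spSchur {K : Type*} [Field K] {n : ℕ} (x : Fin n → K) (lam : Fin n → ℕ) : K :=
  (Matrix.of fun i j : Fin n =>
      x i ^ (lam j + (n - (j : ℕ))) - (x i)⁻¹ ^ (lam j + (n - (j : ℕ)))).det /
  (Matrix.of fun i j : Fin n =>
      x i ^ (n - (j : ℕ)) - (x i)⁻¹ ^ (n - (j : ℕ))).det

/-- The orthosymplectic Schur function `spo_λ(X;Y) = Σ_μ sp_μ(X) · s_{λ'/μ'}(Y)`, where the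
sum is over partitions `μ ⊆ λ` of length at most `n` (the skew Schur polynomial vanishes for
other `μ`), the skew Schur polynomial `s_{λ'/μ'}` being given by the Jacobi–Trudi determinant
`det(h_{λ'_i − μ'_j − i + j})` of size `λ₁ ≥ ℓ(λ')`.  Here `lam : ℕ → ℕ` is `λ` (0-indexed),
with all parts of `λ` among the first `L` entries. -/
noncomputable def spoSchur {K : Type*} [Field K] (n L : ℕ) {m : ℕ} (x : Fin n → K)
    (lam : ℕ → ℕ) (ys : Fin m → K) : K :=
  ∑ g : (i : Fin n) → Fin (lam i + 1),
    if ∀ i j : Fin n, i ≤ j → ((g j : ℕ) ≤ (g i : ℕ)) then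
      spSchur x (fun i => (g i : ℕ)) *
        (Matrix.of fun i j : Fin (lam 0) =>
          hInt ys
            (((((Finset.range L).filter fun t => (i : ℕ) + 1 ≤ lam t).card : ℤ))
              - (((Finset.univ : Finset (Fin n)).filter fun t => (j : ℕ) + 1 ≤ (g t : ℕ)).card : ℤ)
              - (i : ℕ) + (j : ℕ))).det
    else 0

/-!
With one odd variable `y`, the Jacobi–Trudi determinant `s_{λ'/μ'}(y)` is `y^{|λ/μ|}` when
`λ/μ` is a vertical strip and `0` otherwise. Because `λ_{n+1} = ⋯ = λ_ℓ = 1`, the vertical strips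
with `ℓ(μ) ≤ n` are exactly `μ = λ − 1_S` for `S ⊆ {1,…,n}`, and `|λ/μ| = ℓ − n + |S|`. Expanding
the determinant on the right column by column gives `∑_S y^{|S|}` times the Weyl numerator of
`λ − 1_S`, which has two equal columns when `λ − 1_S` is not a partition. The Weyl denominator is
`D`: the entries factor as `(x − x⁻¹) S_k(x + x⁻¹)` with `S_k` Chebyshev polynomials, monic of
degree `k`, leaving a Vandermonde determinant in the `x_i + x_i⁻¹`.
-/

open Finset Matrix Polynomial

theorem Matrix.det_add_eq_sum_det_piecewise {R ι : Type*} [CommRing R] [Fintype ι]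
    [DecidableEq ι] (A B : Matrix ι ι R) :
    (A + B).det = ∑ s : Finset ι, (of fun i j => if j ∈ s then A i j else B i j).det := by
  rw [← det_transpose, transpose_add]
  refine (detRowAlternating.map_add_univ Aᵀ Bᵀ).trans (sum_congr rfl fun s _ => ?_)
  rw [← det_transpose]
  congr 1
  ext i j
  by_cases hi : i ∈ s <;> simp [hi, Finset.piecewise]

namespace Polynomial.Chebyshev

variable {R : Type*} [CommRing R]

theorem sub_mul_S_natCast_eval_add {x x' : R} (h : x * x' = 1) (k : ℕ) :
    (x - x') * (S R k).eval (x + x') = x ^ (k + 1) - x' ^ (k + 1) := by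
  induction k using Nat.twoStepInduction with
  | zero => simp
  | one => simp; ring
  | more k ih ih' =>
    have hS : S R ((k + 2 : ℕ) : ℤ) = X * S R ((k + 1 : ℕ) : ℤ) - S R k := by
      push_cast; exact S_add_two R k
    rw [hS, eval_sub, eval_mul, eval_X, mul_sub, mul_left_comm, ih', ih]
    linear_combination (x ^ (k + 1) - x' ^ (k + 1)) * h

theorem S_natCast_monic_natDegree [Nontrivial R] (k : ℕ) :
    (S R k).Monic ∧ (S R k).natDegree = k := by
  induction k using Nat.twoStepInduction with
  | zero => simp
  | one => simp
  | more k ih ih' =>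
    have hS : S R ((k + 2 : ℕ) : ℤ) = X * S R ((k + 1 : ℕ) : ℤ) - S R k := by
      push_cast; exact S_add_two R k
    have hXS : (X * S R ((k + 1 : ℕ) : ℤ)).natDegree = k + 2 := by
      rw [monic_X.natDegree_mul ih'.1, ih'.2, natDegree_X]; ring
    have hlt : (S R k).natDegree < (X * S R ((k + 1 : ℕ) : ℤ)).natDegree := by omega
    rw [hS]
    exact ⟨(monic_X.mul ih'.1).sub_of_left (degree_lt_degree hlt),
      by rw [natDegree_sub_eq_left_of_natDegree_lt hlt, hXS]⟩

end Polynomial.Chebyshev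

theorem Matrix.det_eval_rev_eq_prod_sub {R : Type*} [CommRing R] {n : ℕ} (z : Fin n → R)
    (p : Fin n → R[X]) (h_deg : ∀ i, (p i).natDegree = i) (h_monic : ∀ i, (p i).Monic) :
    (of fun i j : Fin n => (p j.rev).eval (z i)).det = ∏ i, ∏ j ∈ Ioi i, (z i - z j) := by
  have hp : (of fun i j : Fin n => (p j.rev).eval (z i))
      = (of fun i j : Fin n => (p j).eval (z i)).submatrix id Fin.revPerm := rfl
  have hv : projVandermonde 1 z = (vandermonde z).submatrix id Fin.revPerm := by
    ext i j; simp [projVandermonde_apply, vandermonde_apply]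
  rw [hp, det_permute', ← det_eval_matrixOfPolynomials_eq_det_vandermonde z p h_deg h_monic,
    ← det_permute', ← hv, det_projVandermonde]
  simp

section Weyl

variable {K : Type*} [Field K] {n : ℕ}

def weylMatrix (x : Fin n → K) (e : Fin n → ℕ) : Matrix (Fin n) (Fin n) K :=
  of fun i j => x i ^ e j - (x i)⁻¹ ^ e j

theorem det_weylMatrix_staircase (x : Fin n → K) (hx : ∀ i, x i ≠ 0) :
    (weylMatrix x fun j => n - j).det
      = (∏ i, (x i - (x i)⁻¹)) * ∏ i, ∏ j ∈ Ioi i, (x i + (x i)⁻¹ - x j - (x j)⁻¹) := by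
  have hfactor : weylMatrix x (fun j => n - j)
      = of fun i j => (x i - (x i)⁻¹) *
          of (fun i j : Fin n => (Chebyshev.S K (j.rev : ℕ)).eval (x i + (x i)⁻¹)) i j := by
    ext i j
    rw [of_apply, of_apply, Chebyshev.sub_mul_S_natCast_eval_add (mul_inv_cancel₀ (hx i)),
      Fin.val_rev, show n - (j + 1) + 1 = n - j by omega]
    rfl
  rw [hfactor, det_mul_column, det_eval_rev_eq_prod_sub _ (fun k => Chebyshev.S K (k : ℕ))
    (fun k => (Chebyshev.S_natCast_monic_natDegree k).2)
    (fun k => (Chebyshev.S_natCast_monic_natDegree k).1)]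
  congr 1
  exact prod_congr rfl fun i _ => prod_congr rfl fun j _ => by ring

theorem det_weylMatrix_add_mul (x : Fin n → K) (y : K) (e f : Fin n → ℕ) :
    (of fun i j => x i ^ e j - (x i)⁻¹ ^ e j + y * (x i ^ f j - (x i)⁻¹ ^ f j)).det
      = ∑ S : Finset (Fin n), y ^ #S * (weylMatrix x fun j => if j ∈ S then f j else e j).det := by
  have hsplit : (of fun i j => x i ^ e j - (x i)⁻¹ ^ e j + y * (x i ^ f j - (x i)⁻¹ ^ f j))
      = (of fun i j => y * weylMatrix x f i j) + weylMatrix x e := by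
    ext i j; simp only [weylMatrix, Matrix.add_apply, of_apply]; ring
  rw [hsplit, det_add_eq_sum_det_piecewise]
  refine sum_congr rfl fun S _ => ?_
  have hcol : (of fun i j => if j ∈ S then (of fun i j => y * weylMatrix x f i j) i j
      else weylMatrix x e i j)
      = of fun i j => (if j ∈ S then y else 1) *
          weylMatrix x (fun j => if j ∈ S then f j else e j) i j := by
    ext i j; by_cases hj : j ∈ S <;> simp [hj, weylMatrix]
  rw [hcol, det_mul_row, Fintype.prod_ite_mem, prod_const]

theorem det_weylMatrix_eq_zero_of_not_injective (x : Fin n → K) {e : Fin n → ℕ}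
    (he : ¬ Function.Injective e) : (weylMatrix x e).det = 0 := by
  obtain ⟨i, j, hij, hne⟩ := Function.not_injective_iff.mp he
  exact det_zero_of_column_eq hne fun k => by simp only [weylMatrix, of_apply, hij]

end Weyl

section JacobiTrudi

variable {R : Type*} [CommRing R]

theorem hInt_fin_one (y : R) (r : ℤ) : hInt ![y] r = if r < 0 then 0 else y ^ r.toNat := by
  simp [hInt, hsym]

/- Subtracting `y ^ (b j - b (j + 1))` times column `j` from column `j + 1`, for all `j` at once,
leaves a lower triangular matrix. -/
open Classical in
theorem det_hInt_fin_one_sub (N : ℕ) (y : R) {a b : ℕ → ℤ} (ha : StrictAnti a)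
    (hb : StrictAnti b) (hba : b ≤ a) :
    (of fun i j : Fin N => hInt ![y] (a i - b j)).det
      = if ∀ j, j + 1 < N → a (j + 1) < b j then ∏ j : Fin N, y ^ (a j - b j).toNat else 0 := by
  set E : Matrix (Fin N) (Fin N) R := of fun i j => hInt ![y] (a i - b j)
  set B : Matrix (Fin N) (Fin N) R :=
    of fun i j => if (j : ℕ) = 0 ∨ a i < b (j - 1) then E i j else 0
  have hEB : E.det = B.det := by
    cases N with
    | zero => simp
    | succ N =>
      refine det_eq_of_forall_col_eq_smul_add_pred (fun j => y ^ (b j - b (j + 1)).toNat)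
        (fun i => by simp [B]) fun i j => ?_
      have hbj : b (j + 1) < b j := hb (Nat.lt_succ_self j)
      simp only [B, E, of_apply, Fin.val_succ, Fin.val_castSucc, hInt_fin_one,
        add_tsub_cancel_right, Nat.succ_ne_zero, false_or]
      split_ifs <;> first | omega | (rw [zero_add, ← pow_add]; congr 1; omega) | simp
  have hlower : B.IsLowerTriangular := fun i j (hij : i < j) => by
    have h1 : a (j - 1) ≤ a i := ha.antitone (show (i : ℕ) ≤ j - 1 by omega)
    have h2 : b (j - 1) ≤ a (j - 1) := hba (j - 1)
    simp only [B, of_apply]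
    rw [if_neg (by omega)]
  have hdiag : ∀ j, B j j = if (j : ℕ) = 0 ∨ a j < b (j - 1) then y ^ (a j - b j).toNat else 0 :=
    fun j => by
      simp only [B, E, of_apply, hInt_fin_one, if_neg (show ¬ a j - b j < 0 by linarith [hba j])]
  rw [hEB, det_of_isLowerTriangular B hlower]
  simp only [hdiag, Fintype.prod_ite_zero]
  congr 1
  refine propext ⟨fun h j hj => by simpa using h ⟨j + 1, hj⟩, fun h j => ?_⟩
  rcases Nat.eq_zero_or_pos j with hj | hj
  · exact .inl hj
  · exact .inr (by simpa [Nat.sub_add_cancel hj] using h (j - 1) (by omega))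

/-- `colLen s f i` is the `(i + 1)`-st part of the partition conjugate to `(f t)_{t ∈ s}`. -/
def colLen {α : Type*} (s : Finset α) (f : α → ℕ) (i : ℕ) : ℕ := #{t ∈ s | i + 1 ≤ f t}

section colLen

variable {α : Type*} (s : Finset α)

theorem colLen_antitone (f : α → ℕ) : Antitone (colLen s f) := fun _ _ hij =>
  card_le_card (monotone_filter_right s fun _ h => by omega)

theorem colLen_mono {f g : α → ℕ} (hfg : ∀ t ∈ s, f t ≤ g t) (i : ℕ) :
    colLen s f i ≤ colLen s g i :=
  card_le_card fun t ht => by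
    simp only [mem_filter] at ht ⊢
    exact ⟨ht.1, ht.2.trans (hfg t ht.1)⟩

theorem sum_colLen (f : α → ℕ) {N : ℕ} (hN : ∀ t ∈ s, f t ≤ N) :
    ∑ i ∈ range N, colLen s f i = ∑ t ∈ s, f t := by
  simp only [colLen, card_filter]
  rw [sum_comm]
  refine sum_congr rfl fun t ht => ?_
  rw [← card_filter, show {i ∈ range N | i + 1 ≤ f t} = range (f t) by
    ext i; simp only [mem_filter, mem_range]; have := hN t ht; omega, card_range]

end colLen

theorem colLen_succ_le_iff {L N : ℕ} {lam nu : ℕ → ℕ} (hlam : Antitone lam) (hnu : Antitone nu)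
    (hN : ∀ t, lam t ≤ N) :
    (∀ j, j + 1 < N → colLen (range L) lam (j + 1) ≤ colLen (range L) nu j)
      ↔ ∀ t < L, lam t ≤ nu t + 1 := by
  constructor
  · intro h t ht
    by_contra! hgap
    have hq : colLen (range L) nu (nu t) ≤ t := by
      refine (card_le_card fun s hs => ?_).trans (card_range t).le
      simp only [mem_filter, mem_range] at hs ⊢
      by_contra! hts
      have := hnu hts
      omega
    have hp : t + 1 ≤ colLen (range L) lam (nu t + 1) := by
      refine (card_range (t + 1)).ge.trans (card_le_card fun s hs => ?_)
      simp only [mem_filter, mem_range] at hs ⊢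
      have := hlam (Nat.lt_succ_iff.mp hs)
      omega
    have := h (nu t) (by have := hN t; omega)
    omega
  · intro h j _
    refine card_le_card fun t ht => ?_
    simp only [mem_filter, mem_range] at ht ⊢
    have := h t ht.1
    omega

theorem det_hInt_colLen (y : R) {L N : ℕ} {lam nu : ℕ → ℕ} (hlam : Antitone lam)
    (hnu : Antitone nu) (hnl : nu ≤ lam) (hN : ∀ t, lam t ≤ N) :
    (of fun i j : Fin N =>
        hInt ![y] ((colLen (range L) lam i : ℤ) - colLen (range L) nu j - i + j)).det
      = if ∀ t < L, lam t ≤ nu t + 1 then y ^ ∑ t ∈ range L, (lam t - nu t) else 0 := by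
  classical
  have hqp : ∀ j, colLen (range L) nu j ≤ colLen (range L) lam j :=
    colLen_mono _ fun t _ => hnl t
  have hstrict : ∀ r : ℕ → ℕ, Antitone r → StrictAnti fun i => (r i : ℤ) - i :=
    fun r hr i j hij => show (r j : ℤ) - j < r i - i by have := hr hij.le; omega
  have hentry : (of fun i j : Fin N =>
        hInt ![y] ((colLen (range L) lam i : ℤ) - colLen (range L) nu j - i + j))
      = of fun i j : Fin N => hInt ![y]
          (((colLen (range L) lam i : ℤ) - i) - ((colLen (range L) nu j : ℤ) - j)) := by
    ext i j; simp only [of_apply]; ring_nf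
  rw [hentry, det_hInt_fin_one_sub N y (hstrict _ (colLen_antitone _ _))
    (hstrict _ (colLen_antitone _ _)) fun j => by have := hqp j; simp only; omega]
  refine if_congr ?_ ?_ rfl
  · rw [← colLen_succ_le_iff hlam hnu hN]
    refine forall₂_congr fun j _ => ?_
    push_cast
    omega
  · rw [prod_pow_eq_pow_sum, sum_tsub_distrib _ fun t _ => hnl t,
      ← sum_colLen (range L) lam fun t _ => hN t,
      ← sum_colLen (range L) nu fun t _ => (hnl t).trans (hN t),
      ← sum_tsub_distrib _ fun j _ => hqp j, ← Fin.sum_univ_eq_sum_range]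
    refine congrArg _ (sum_congr rfl fun j _ => ?_)
    have := hqp j
    omega

def extendByZero {n : ℕ} (f : Fin n → ℕ) (t : ℕ) : ℕ := if h : t < n then f ⟨t, h⟩ else 0

section extendByZero

variable {n : ℕ} {f : Fin n → ℕ}

theorem extendByZero_antitone (hf : Antitone f) : Antitone (extendByZero f) := fun s t hst => by
  unfold extendByZero
  split_ifs with ht hs hs
  · exact hf (Fin.mk_le_mk.mpr hst)
  · omega
  · exact Nat.zero_le _
  · exact le_rfl

theorem colLen_univ_eq_colLen_range {L : ℕ} (hnL : n ≤ L) (i : ℕ) :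
    colLen univ f i = colLen (range L) (extendByZero f) i := by
  unfold colLen
  refine card_bij (fun t _ => (t : ℕ)) (fun t ht => ?_) (fun _ _ _ _ h => Fin.ext h) fun t ht => ?_
  · rw [mem_filter] at ht ⊢
    exact ⟨mem_range.2 (by omega), by simpa [extendByZero] using ht.2⟩
  · rw [mem_filter, mem_range, extendByZero] at ht
    split_ifs at ht with htn
    · exact ⟨⟨t, htn⟩, by simpa using ht.2, rfl⟩
    · omega

end extendByZero

theorem det_jacobiTrudi_fin_one {n ℓ : ℕ} (hnl : n ≤ ℓ) (y : R) {lam : ℕ → ℕ}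
    (hA : Antitone lam) (h1 : ∀ i, n ≤ i → i < ℓ → lam i = 1)
    (g : (i : Fin n) → Fin (lam i + 1)) (hg : Antitone fun i => (g i : ℕ)) :
    (of fun i j : Fin (lam 0) =>
        hInt ![y] ((colLen (range ℓ) lam i : ℤ) - colLen univ (fun t => (g t : ℕ)) j - i + j)).det
      = if ∀ t : Fin n, lam t ≤ g t + 1 then y ^ ((ℓ - n) + ∑ t : Fin n, (lam t - g t))
        else 0 := by
  have hnu : ∀ t : Fin n, extendByZero (fun t => (g t : ℕ)) t = g t := fun t => dif_pos t.isLt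
  have hnu' : ∀ t, n ≤ t → extendByZero (fun t => (g t : ℕ)) t = 0 :=
    fun t ht => dif_neg (by omega)
  have hnl' : extendByZero (fun t => (g t : ℕ)) ≤ lam := fun t => by
    unfold extendByZero; split_ifs with ht
    · exact Fin.is_le _
    · exact Nat.zero_le _
  have hmat := det_hInt_colLen (L := ℓ) y hA (extendByZero_antitone hg) hnl' fun t => hA t.zero_le
  simp only [← colLen_univ_eq_colLen_range hnl] at hmat
  refine hmat.trans (if_congr ⟨fun h t => ?_, fun h t ht => ?_⟩ ?_ rfl)
  · simpa [hnu] using h t (by omega)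
  · by_cases htn : t < n
    · simpa [hnu ⟨t, htn⟩] using h ⟨t, htn⟩
    · simp [h1 t (by omega) ht]
  · rw [← sum_range_add_sum_Ico _ hnl, ← Fin.sum_univ_eq_sum_range, add_comm,
      sum_congr rfl fun t (ht : t ∈ Ico n ℓ) =>
        show lam t - extendByZero (fun t => (g t : ℕ)) t = 1 by
          rw [mem_Ico] at ht; rw [h1 t ht.1 ht.2, hnu' t ht.1],
      sum_const, Nat.card_Ico, smul_eq_mul, mul_one]
    simp only [hnu]

end JacobiTrudi

theorem spoSchur_eq_sum_colLen {K : Type*} [Field K] (n L : ℕ) {m : ℕ} (x : Fin n → K)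
    (lam : ℕ → ℕ) (ys : Fin m → K) :
    spoSchur n L x lam ys
      = ∑ g : (i : Fin n) → Fin (lam i + 1),
          if ∀ i j : Fin n, i ≤ j → ((g j : ℕ) ≤ (g i : ℕ)) then
            spSchur x (fun i => (g i : ℕ)) *
              (of fun i j : Fin (lam 0) => hInt ys
                ((colLen (range L) lam i : ℤ) - colLen univ (fun t => (g t : ℕ)) j - i + j)).det
          else 0 :=
  rfl

def lowerRows (lam : ℕ → ℕ) {n : ℕ} (S : Finset (Fin n)) (i : Fin n) : Fin (lam i + 1) :=
  ⟨lam i - if i ∈ S then 1 else 0, by omega⟩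

section lowerRows

variable {lam : ℕ → ℕ} {n : ℕ}

theorem mem_iff_lowerRows_lt (hpos : ∀ t : Fin n, 1 ≤ lam t) (S : Finset (Fin n)) (t : Fin n) :
    t ∈ S ↔ (lowerRows lam S t : ℕ) < lam t := by
  have := hpos t
  simp only [lowerRows]
  split_ifs with ht <;> simp only [ht, true_iff, false_iff] <;> omega

theorem lowerRows_injective (hpos : ∀ t : Fin n, 1 ≤ lam t) :
    Function.Injective (lowerRows lam (n := n)) := fun S T hST => by
  ext t
  rw [mem_iff_lowerRows_lt hpos, mem_iff_lowerRows_lt hpos, hST]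

theorem mem_range_lowerRows {g : (i : Fin n) → Fin (lam i + 1)}
    (hg : ∀ t : Fin n, lam t ≤ g t + 1) : g ∈ Set.range (lowerRows lam) :=
  ⟨univ.filter fun t => (g t : ℕ) < lam t, funext fun t => Fin.ext <| by
    have := hg t
    have := (g t).isLt
    simp only [lowerRows, Finset.mem_filter, Finset.mem_univ, true_and]
    split_ifs <;> omega⟩

theorem lam_le_lowerRows_add_one (S : Finset (Fin n)) (t : Fin n) :
    lam t ≤ lowerRows lam S t + 1 := by
  simp only [lowerRows]
  split_ifs <;> omega

theorem sum_sub_lowerRows (hpos : ∀ t : Fin n, 1 ≤ lam t) (S : Finset (Fin n)) :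
    ∑ t : Fin n, (lam t - lowerRows lam S t) = #S := by
  calc ∑ t : Fin n, (lam t - lowerRows lam S t) = ∑ t : Fin n, if t ∈ S then 1 else 0 :=
        sum_congr rfl fun t _ => by
          have := hpos t
          simp only [lowerRows]
          split_ifs <;> omega
    _ = #S := by simp

theorem antitone_lowerRows_of_injective (hA : Antitone lam) (S : Finset (Fin n))
    (hinj : Function.Injective fun j : Fin n => (lowerRows lam S j : ℕ) + (n - j)) :
    Antitone fun j => (lowerRows lam S j : ℕ) := by
  cases n with
  | zero => exact fun i => i.elim0
  | succ m =>
    refine Fin.antitone_iff_succ_le.mpr fun i => ?_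
    by_contra hlt
    refine (Fin.castSucc_lt_succ : i.castSucc < i.succ).ne (hinj ?_)
    have : lam (i + 1) ≤ lam i := hA (Nat.le_succ i)
    have := i.isLt
    simp only [lowerRows, Fin.val_succ, Fin.val_castSucc] at hlt ⊢
    split_ifs at hlt ⊢ <;> omega

end lowerRows

theorem spo_long_column_general {K : Type*} [Field K] (n ℓ : ℕ) (hnl : n < ℓ)
    (x : Fin n → K) (hx : ∀ i, x i ≠ 0) (y : K)
    (lam : ℕ → ℕ) (hA : Antitone lam)
    (h1 : ∀ i, n ≤ i → i < ℓ → lam i = 1) :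
    spoSchur n ℓ x lam ![y]
      = (y ^ (ℓ - n) /
          ((∏ i, (x i - (x i)⁻¹)) *
            ∏ i, ∏ j ∈ Finset.Ioi i, (x i + (x i)⁻¹ - x j - (x j)⁻¹))) *
        (Matrix.of fun i j : Fin n =>
          x i ^ (lam j + (n - (j : ℕ))) - (x i)⁻¹ ^ (lam j + (n - (j : ℕ)))
            + y * (x i ^ (lam j + (n - 1 - (j : ℕ)))
              - (x i)⁻¹ ^ (lam j + (n - 1 - (j : ℕ))))).det := by
  have hpos : ∀ t : Fin n, 1 ≤ lam t := fun t => h1 n le_rfl hnl ▸ hA t.isLt.le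
  have hexp : ∀ S : Finset (Fin n),
      (fun j : Fin n => if j ∈ S then lam j + (n - 1 - j) else lam j + (n - j))
        = fun j => (lowerRows lam S j : ℕ) + (n - j) := fun S => funext fun j => by
    have := hpos j
    have := j.isLt
    simp only [lowerRows]
    split_ifs <;> omega
  rw [det_weylMatrix_add_mul, mul_sum, spoSchur_eq_sum_colLen]
  symm
  refine Fintype.sum_of_injective (lowerRows lam) (lowerRows_injective hpos) _ _
    (fun g hg => ?_) fun S => ?_
  · split_ifs with hanti
    · rw [det_jacobiTrudi_fin_one hnl.le y hA h1 g hanti,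
        if_neg fun hstrip => hg (mem_range_lowerRows hstrip), mul_zero]
    · rfl
  · rw [hexp]
    split_ifs with hanti
    · rw [det_jacobiTrudi_fin_one hnl.le y hA h1 _ hanti, if_pos (lam_le_lowerRows_add_one S),
        sum_sub_lowerRows hpos, spSchur, ← det_weylMatrix_staircase x hx, pow_add]
      simp only [weylMatrix]
      ring
    · rw [det_weylMatrix_eq_zero_of_not_injective x
        fun hinj => hanti (antitone_lowerRows_of_injective hA S hinj)]
      ring

/-- For `λ` of length `ℓ > n` with `λ_{n+1} = ⋯ = λ_ℓ = 1`:
`spo_λ(x₁,…,x_n; y) = (y^{ℓ−n}/D) · det(x_i^{μ_j+n−j+1} − x̄_i^{μ_j+n−j+1}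
+ y(x_i^{μ_j+n−j} − x̄_i^{μ_j+n−j}))` where `μ = (λ₁,…,λ_n)`. -/
theorem spo_long_column {K : Type*} [Field K] (n ℓ : ℕ) (hnl : n < ℓ)
    (x : Fin n → K) (hx : ∀ i, x i ≠ 0) (y : K)
    (lam : ℕ → ℕ) (hA : Antitone lam)
    (h1 : ∀ i, n ≤ i → i < ℓ → lam i = 1) (h0 : ∀ i, ℓ ≤ i → lam i = 0) :
    spoSchur n ℓ x lam ![y]
      = (y ^ (ℓ - n) /
          ((∏ i, (x i - (x i)⁻¹)) *
            ∏ i, ∏ j ∈ Finset.Ioi i, (x i + (x i)⁻¹ - x j - (x j)⁻¹))) *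
        (Matrix.of fun i j : Fin n =>
          x i ^ (lam j + (n - (j : ℕ))) - (x i)⁻¹ ^ (lam j + (n - (j : ℕ)))
            + y * (x i ^ (lam j + (n - 1 - (j : ℕ)))
              - (x i)⁻¹ ^ (lam j + (n - 1 - (j : ℕ))))).det :=
  spo_long_column_general n ℓ hnl x hx y lam hA h1
end
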